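/- For any X ∈ ℝ^{n×p}, y ∈ ℝⁿ and λ > 0, strong duality holds for the ℓ₁²-penalized least squares problem: inf_{β ∈ ℝᵖ} { (1/n)·‖y − Xβ‖₂² + 2λ·‖β‖₁² } = sup_{u ∈ ℝⁿ} { (1/n)·(‖y‖₂² − ‖y − u‖₂²) − (1/(2λ))·‖(1/n)·Xᵀu‖_∞² }. -/

import Mathlib

open MeasureTheory ProbabilityTheory Matrix
open scoped ENNReal

noncomputable section

/-- squared Euclidean norm on ℝⁿ -/
def l2sq {n : ℕ} (v : Fin n → ℝ) : ℝ := ∑ i, (v i) ^ 2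

/-- ℓ₁ norm on ℝᵖ -/
def l1 {p : ℕ} (b : Fin p → ℝ) : ℝ := ∑ j, |b j|

/-- sup norm on ℝᵖ -/
def linf {p : ℕ} (v : Fin p → ℝ) : ℝ := ⨆ j, |v j|


/-!
Weak duality comes from the identity
`‖y‖² - ‖y - u‖² = ‖y - Xβ‖² + 2⟪u, Xβ⟫ - ‖y - Xβ - u‖²`, Hölder's inequality
`⟪Xᵀu/n, β⟫ ≤ ‖β‖₁ ‖Xᵀu/n‖_∞` and `2ab ≤ 2λa² + b²/(2λ)`.
The objective is continuous and coercive, so it has a minimiser `β̂`, and the gap closes at the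
residual `u = y - Xβ̂`: comparing the objective at `β̂` with its values at `(1 - t)β̂` and at
`β̂ ± t eⱼ` for small `t > 0` gives `⟪Xᵀu/n, β̂⟫ ≥ 2λ‖β̂‖₁²` and `‖Xᵀu/n‖_∞ ≤ 2λ‖β̂‖₁`.
-/

open Filter Topology

theorem nonneg_of_forall_nonneg_mul_add_mul_sq {B C : ℝ}
    (h : ∀ t ∈ Set.Ioc (0 : ℝ) 1, 0 ≤ B * t + C * t ^ 2) : 0 ≤ B := by
  have hlim : Tendsto (fun t => B + C * t) (𝓝[>] 0) (𝓝 B) := by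
    have : Continuous fun t : ℝ => B + C * t := by fun_prop
    simpa using (this.tendsto 0).mono_left nhdsWithin_le_nhds
  refine ge_of_tendsto hlim (eventually_of_mem (Ioc_mem_nhdsGT one_pos) fun t ht => ?_)
  have hBt : 0 ≤ t * (B + C * t) := by linarith [h t ht]
  exact nonneg_of_mul_nonneg_right hBt ht.1

theorem ciInf_eq_ciSup_of_forall_le_of_le {ι κ α : Type*} [ConditionallyCompleteLattice α]
    {f : ι → α} {g : κ → α} (hweak : ∀ i k, g k ≤ f i) {i₀ : ι} {k₀ : κ}
    (hgap : f i₀ ≤ g k₀) : ⨅ i, f i = ⨆ k, g k := by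
  have : Nonempty ι := ⟨i₀⟩
  have : Nonempty κ := ⟨k₀⟩
  apply le_antisymm
  · calc ⨅ i, f i ≤ f i₀ := ciInf_le ⟨g k₀, Set.forall_mem_range.2 (hweak · k₀)⟩ i₀
      _ ≤ g k₀ := hgap
      _ ≤ ⨆ k, g k := le_ciSup ⟨f i₀, Set.forall_mem_range.2 (hweak i₀)⟩ k₀
  · exact ciSup_le fun k => le_ciInf fun i => hweak i k

section Norms

variable {n p : ℕ}

theorem l2sq_eq_dotProduct (v : Fin n → ℝ) : l2sq v = v ⬝ᵥ v := by
  simp only [l2sq, dotProduct, sq]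

theorem l2sq_nonneg (v : Fin n → ℝ) : 0 ≤ l2sq v :=
  Finset.sum_nonneg fun _ _ => sq_nonneg _

theorem l2sq_sub_smul (u v : Fin n → ℝ) (t : ℝ) :
    l2sq (u - t • v) = l2sq u - 2 * t * (u ⬝ᵥ v) + t ^ 2 * l2sq v := by
  simp only [l2sq_eq_dotProduct, sub_dotProduct, dotProduct_sub, smul_dotProduct,
    dotProduct_smul, dotProduct_comm v u, smul_eq_mul]
  ring

theorem l2sq_sub_l2sq_sub (y u m : Fin n → ℝ) :
    l2sq y - l2sq (y - u) = l2sq (y - m) + 2 * (u ⬝ᵥ m) - l2sq (y - m - u) := by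
  simp only [l2sq_eq_dotProduct, sub_dotProduct, dotProduct_sub, dotProduct_comm y u,
    dotProduct_comm y m, dotProduct_comm m u]
  ring

theorem l2sq_zero : l2sq (0 : Fin n → ℝ) = 0 := by
  simp [l2sq]

theorem l1_nonneg (β : Fin p → ℝ) : 0 ≤ l1 β :=
  Finset.sum_nonneg fun _ _ => abs_nonneg _

theorem l1_add_le (β γ : Fin p → ℝ) : l1 (β + γ) ≤ l1 β + l1 γ := by
  simp only [l1, Pi.add_apply, ← Finset.sum_add_distrib]
  exact Finset.sum_le_sum fun j _ => abs_add_le _ _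

theorem l1_smul (c : ℝ) (β : Fin p → ℝ) : l1 (c • β) = |c| * l1 β := by
  simp [l1, abs_mul, Finset.mul_sum]

theorem l1_single (j : Fin p) (x : ℝ) : l1 (Pi.single j x) = |x| := by
  simp [l1, Pi.single_apply, apply_ite]

theorem norm_le_l1 (β : Fin p → ℝ) : ‖β‖ ≤ l1 β :=
  (pi_norm_le_iff_of_nonneg (l1_nonneg β)).2 fun j =>
    Finset.single_le_sum (f := fun k => |β k|) (fun _ _ => abs_nonneg _) (Finset.mem_univ j)

theorem abs_le_linf (v : Fin p → ℝ) (j : Fin p) : |v j| ≤ linf v :=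
  le_ciSup (f := fun k => |v k|) (Set.finite_range _).bddAbove j

theorem linf_nonneg (v : Fin p → ℝ) : 0 ≤ linf v :=
  Real.iSup_nonneg fun _ => abs_nonneg _

theorem linf_le {v : Fin p → ℝ} {c : ℝ} (hc : 0 ≤ c) (h : ∀ j, |v j| ≤ c) : linf v ≤ c :=
  Real.iSup_le h hc

theorem dotProduct_le_l1_mul_linf (β v : Fin p → ℝ) : β ⬝ᵥ v ≤ l1 β * linf v := by
  rw [l1, Finset.sum_mul]
  refine Finset.sum_le_sum fun j _ => ?_
  calc β j * v j ≤ |β j| * |v j| := (le_abs_self _).trans (abs_mul _ _).le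
    _ ≤ |β j| * linf v := mul_le_mul_of_nonneg_left (abs_le_linf v j) (abs_nonneg _)

end Norms

section OrganicLasso

variable {n p : ℕ} (X : Matrix (Fin n) (Fin p) ℝ) (y : Fin n → ℝ) (lam : ℝ)

def organicLassoObjective (β : Fin p → ℝ) : ℝ :=
  (1 / n) * l2sq (y - X *ᵥ β) + 2 * lam * (l1 β) ^ 2

def organicLassoDual (u : Fin n → ℝ) : ℝ :=
  (1 / n) * (l2sq y - l2sq (y - u)) - (1 / (2 * lam)) * (linf ((n : ℝ)⁻¹ • Xᵀ *ᵥ u)) ^ 2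

variable {X y lam}

theorem organicLassoDual_le_objective (hlam : 0 < lam) (β : Fin p → ℝ) (u : Fin n → ℝ) :
    organicLassoDual X y lam u ≤ organicLassoObjective X y lam β := by
  set a := l1 β
  set b := linf ((n : ℝ)⁻¹ • Xᵀ *ᵥ u)
  have hholder : (1 / n) * (u ⬝ᵥ X *ᵥ β) ≤ a * b := by
    calc (1 / n) * (u ⬝ᵥ X *ᵥ β) = β ⬝ᵥ ((n : ℝ)⁻¹ • Xᵀ *ᵥ u) := by
          rw [dotProduct_mulVec, ← mulVec_transpose, dotProduct_comm, dotProduct_smul,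
            smul_eq_mul, one_div]
      _ ≤ a * b := dotProduct_le_l1_mul_linf _ _
  have hyoung : 2 * (a * b) ≤ 2 * lam * a ^ 2 + 1 / (2 * lam) * b ^ 2 := by
    have hsq : 0 ≤ (2 * lam * a - b) ^ 2 / (2 * lam) := by positivity
    have hexpand : (2 * lam * a - b) ^ 2 / (2 * lam)
        = 2 * lam * a ^ 2 + 1 / (2 * lam) * b ^ 2 - 2 * (a * b) := by
      field_simp
      ring
    linarith
  have hres : 0 ≤ (1 / n) * l2sq (y - X *ᵥ β - u) := by positivity [l2sq_nonneg (y - X *ᵥ β - u)]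
  unfold organicLassoDual organicLassoObjective
  rw [l2sq_sub_l2sq_sub y u (X *ᵥ β)]
  linarith

theorem exists_forall_organicLassoObjective_le (hlam : 0 < lam) :
    ∃ β₀, ∀ β, organicLassoObjective X y lam β₀ ≤ organicLassoObjective X y lam β := by
  have hcont : Continuous (organicLassoObjective X y lam) := by
    unfold organicLassoObjective l2sq l1
    fun_prop
  refine hcont.exists_forall_le ?_
  have hcoercive : Tendsto (fun β : Fin p → ℝ => 2 * lam * ‖β‖ ^ 2) (cocompact _) atTop :=
    ((tendsto_pow_atTop two_ne_zero).comp tendsto_norm_cocompact_atTop).const_mul_atTop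
      (by positivity)
  refine tendsto_atTop_mono (fun β => ?_) hcoercive
  have hnorm := pow_le_pow_left₀ (norm_nonneg β) (norm_le_l1 β) 2
  have hfit : 0 ≤ (1 / n) * l2sq (y - X *ᵥ β) := by positivity [l2sq_nonneg (y - X *ᵥ β)]
  unfold organicLassoObjective
  nlinarith

theorem residual_dotProduct_le_of_l1_le (hlam : 0 ≤ lam) {β₀ : Fin p → ℝ}
    (hmin : ∀ β, organicLassoObjective X y lam β₀ ≤ organicLassoObjective X y lam β)
    (δ : Fin p → ℝ) (k : ℝ) (hk : ∀ t ∈ Set.Ioc (0 : ℝ) 1, l1 (β₀ + t • δ) ≤ l1 β₀ + t * k) :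
    (1 / n) * ((Xᵀ *ᵥ (y - X *ᵥ β₀)) ⬝ᵥ δ) ≤ 2 * lam * l1 β₀ * k := by
  set u := y - X *ᵥ β₀
  rw [mulVec_transpose, ← dotProduct_mulVec]
  suffices 0 ≤ 2 * (2 * lam * l1 β₀ * k - (1 / n) * (u ⬝ᵥ X *ᵥ δ)) by linarith
  refine nonneg_of_forall_nonneg_mul_add_mul_sq
    (C := (1 / n) * l2sq (X *ᵥ δ) + 2 * lam * k ^ 2) fun t ht => ?_
  have hresidual : y - X *ᵥ (β₀ + t • δ) = u - t • X *ᵥ δ := by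
    rw [mulVec_add, mulVec_smul, sub_add_eq_sub_sub]
  have hl1 : 2 * lam * l1 (β₀ + t • δ) ^ 2 ≤ 2 * lam * (l1 β₀ + t * k) ^ 2 :=
    mul_le_mul_of_nonneg_left (pow_le_pow_left₀ (l1_nonneg _) (hk t ht) 2) (by positivity)
  have hcompare := hmin (β₀ + t • δ)
  unfold organicLassoObjective at hcompare
  rw [hresidual, l2sq_sub_smul] at hcompare
  linarith

theorem le_residual_dotProduct (hlam : 0 ≤ lam) {β₀ : Fin p → ℝ}
    (hmin : ∀ β, organicLassoObjective X y lam β₀ ≤ organicLassoObjective X y lam β) :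
    2 * lam * l1 β₀ ^ 2 ≤ (1 / n) * ((Xᵀ *ᵥ (y - X *ᵥ β₀)) ⬝ᵥ β₀) := by
  have h := residual_dotProduct_le_of_l1_le hlam hmin (-β₀) (-l1 β₀) fun t ht => by
    have hshrink : β₀ + t • -β₀ = (1 - t) • β₀ := by
      rw [sub_smul, one_smul, smul_neg, sub_eq_add_neg]
    rw [hshrink, l1_smul, abs_of_nonneg (sub_nonneg.2 ht.2)]
    linarith
  rw [dotProduct_neg] at h
  linarith

theorem linf_residual_le (hlam : 0 ≤ lam) {β₀ : Fin p → ℝ}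
    (hmin : ∀ β, organicLassoObjective X y lam β₀ ≤ organicLassoObjective X y lam β) :
    linf ((n : ℝ)⁻¹ • Xᵀ *ᵥ (y - X *ᵥ β₀)) ≤ 2 * lam * l1 β₀ := by
  have hcoord : ∀ j, ∀ s : ℝ, |s| = 1 →
      s * ((n : ℝ)⁻¹ • Xᵀ *ᵥ (y - X *ᵥ β₀)) j ≤ 2 * lam * l1 β₀ := by
    intro j s hs
    have h := residual_dotProduct_le_of_l1_le hlam hmin (Pi.single j s : Fin p → ℝ) 1 fun t ht => by
      calc l1 (β₀ + t • (Pi.single j s : Fin p → ℝ))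
          ≤ l1 β₀ + l1 (t • (Pi.single j s : Fin p → ℝ)) := l1_add_le _ _
        _ = l1 β₀ + t * 1 := by rw [l1_smul, l1_single, hs, abs_of_pos ht.1]
    rw [dotProduct_single, one_div] at h
    rw [Pi.smul_apply, smul_eq_mul]
    linarith
  refine linf_le (by positivity [l1_nonneg β₀]) fun j => abs_le.2 ⟨?_, ?_⟩
  · linarith [hcoord j (-1) (by norm_num)]
  · linarith [hcoord j 1 (by norm_num)]

theorem organicLassoObjective_le_dual_residual (hlam : 0 < lam) {β₀ : Fin p → ℝ}
    (hmin : ∀ β, organicLassoObjective X y lam β₀ ≤ organicLassoObjective X y lam β) :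
    organicLassoObjective X y lam β₀ ≤ organicLassoDual X y lam (y - X *ᵥ β₀) := by
  set a := l1 β₀
  set b := linf ((n : ℝ)⁻¹ • Xᵀ *ᵥ (y - X *ᵥ β₀))
  have hdot := le_residual_dotProduct hlam.le hmin
  have hpenalty : 1 / (2 * lam) * b ^ 2 ≤ 2 * lam * a ^ 2 := by
    have hb := pow_le_pow_left₀ (linf_nonneg _) (linf_residual_le hlam.le hmin) 2
    calc 1 / (2 * lam) * b ^ 2 ≤ 1 / (2 * lam) * (2 * lam * a) ^ 2 :=
          mul_le_mul_of_nonneg_left hb (by positivity)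
      _ = 2 * lam * a ^ 2 := by field_simp
  unfold organicLassoDual organicLassoObjective
  rw [l2sq_sub_l2sq_sub y (y - X *ᵥ β₀) (X *ᵥ β₀), sub_self, l2sq_zero,
    dotProduct_mulVec, ← mulVec_transpose]
  linarith

end OrganicLasso

theorem organic_lasso_strong_duality_general {n p : ℕ}
    (X : Matrix (Fin n) (Fin p) ℝ) (y : Fin n → ℝ) (lam : ℝ) (hlam : 0 < lam) :
    (⨅ β : Fin p → ℝ, (1/n) * l2sq (y - X.mulVec β) + 2*lam * (l1 β)^2)
      = ⨆ u : Fin n → ℝ, ((1/n) * (l2sq y - l2sq (y - u))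
          - (1/(2*lam)) * (linf ((n:ℝ)⁻¹ • Xᵀ.mulVec u))^2) := by
  obtain ⟨β₀, hmin⟩ := exists_forall_organicLassoObjective_le (X := X) (y := y) hlam
  exact ciInf_eq_ciSup_of_forall_le_of_le (organicLassoDual_le_objective hlam)
    (organicLassoObjective_le_dual_residual hlam hmin)

/-- strong duality for the ℓ₁²-penalized least squares problem. -/
theorem organic_lasso_strong_duality {n p : ℕ} (hn : 0 < n)
    (X : Matrix (Fin n) (Fin p) ℝ) (y : Fin n → ℝ) (lam : ℝ) (hlam : 0 < lam) :
    (⨅ β : Fin p → ℝ, (1/n) * l2sq (y - X.mulVec β) + 2*lam * (l1 β)^2)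
      = ⨆ u : Fin n → ℝ, ((1/n) * (l2sq y - l2sq (y - u))
          - (1/(2*lam)) * (linf ((n:ℝ)⁻¹ • Xᵀ.mulVec u))^2) :=
  organic_lasso_strong_duality_general X y lam hlam
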